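/- For all F,G ∈ dom S there holds the Green identity ⟨F,SG⟩_{L²(X¹,m¹)} − ⟨SF,G⟩_{L²(X¹,m¹)} = ⟨ΓF,Γ'G⟩_{ℓ²(X⁰,m⁰)} − ⟨Γ'F,ΓG⟩_{ℓ²(X⁰,m⁰)}. -/

import Mathlib

open MeasureTheory Set ENNReal

set_option linter.unusedSectionVars false

noncomputable section

/-- A weighted network: countable connected graph without loops or multiple edges,
equipped with positive conductances `c` satisfying `m⁰(x) = ∑_{y∼x} c(xy) < ∞`. -/
structure Network (V : Type) : Type where
  adj : V → V → Prop
  adj_symm : ∀ x y, adj x y → adj y x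
  adj_irrefl : ∀ x, ¬ adj x x
  adj_connected : ∀ x y, Relation.ReflTransGen adj x y
  c : V → V → ℝ
  c_symm : ∀ x y, c x y = c y x
  c_pos : ∀ x y, adj x y → 0 < c x y
  c_eq_zero : ∀ x y, ¬ adj x y → c x y = 0
  c_summable : ∀ x, Summable fun y => c x y

namespace Network

variable {V : Type} [Countable V] [MeasurableSpace V] [DiscreteMeasurableSpace V]

/-- The vertex weight `m⁰(x) = ∑_{y : y ∼ x} c(xy)`. -/
def m0 (N : Network V) (x : V) : ℝ := ∑' y, N.c x y

/-- The measure `m¹` on the metric graph `X¹`.  A point `((x,y),t)` represents the point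
at distance `t ∈ (0,1)` from `x` on the edge `[x,y]`; each edge appears with both
orientations, whence the factor `1/2`. -/
def edgeMeasure (N : Network V) : Measure ((V × V) × ℝ) :=
  Measure.sum fun e : V × V =>
    Measure.map (fun t => (e, t))
      ((ENNReal.ofReal (N.c e.1 e.2 / 2)) • (volume.restrict (Set.Ioo (0:ℝ) 1)))

/-- The identification `(xy,t) ≡ (yx,1-t)` of the two orientations of an edge. -/
def eFlip : (V × V) × ℝ → (V × V) × ℝ := fun p => ((p.1.2, p.1.1), 1 - p.2)

theorem measurable_eFlip : Measurable (eFlip (V := V)) := by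
  apply Measurable.prod
  · exact ((measurable_snd.comp measurable_fst).prodMk (measurable_fst.comp measurable_fst))
  · exact measurable_const.sub measurable_snd

theorem measurePreserving_eFlip (N : Network V) :
    MeasurePreserving (eFlip (V := V)) N.edgeMeasure N.edgeMeasure := by
  refine ⟨measurable_eFlip, ?_⟩
  ext s hs
  rw [Measure.map_apply measurable_eFlip hs, edgeMeasure,
    Measure.sum_apply _ (measurable_eFlip hs), Measure.sum_apply _ hs]
  have key : ∀ e : V × V,
      (Measure.map (fun t => (e, t))
        ((ENNReal.ofReal (N.c e.1 e.2 / 2)) • (volume.restrict (Set.Ioo (0:ℝ) 1))))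
          (eFlip ⁻¹' s)
      = (Measure.map (fun t => ((e.2, e.1), t))
        ((ENNReal.ofReal (N.c e.2 e.1 / 2)) • (volume.restrict (Set.Ioo (0:ℝ) 1)))) s := by
    intro e
    have hme : Measurable fun t : ℝ => (e, t) := measurable_prodMk_left
    have hme' : Measurable fun t : ℝ => ((e.2, e.1), t) := measurable_prodMk_left
    rw [Measure.map_apply hme (measurable_eFlip hs), Measure.map_apply hme' hs,
      Measure.smul_apply, Measure.smul_apply, N.c_symm e.1 e.2]
    congr 1
    have hpre : ((fun t : ℝ => (e, t)) ⁻¹' (eFlip ⁻¹' s))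
        = (fun t : ℝ => 1 - t) ⁻¹' ((fun t : ℝ => ((e.2, e.1), t)) ⁻¹' s) := by
      ext t; simp [eFlip]
    rw [hpre]
    have hmp : MeasurePreserving (fun t : ℝ => 1 - t)
        (volume.restrict (Set.Ioo (0:ℝ) 1)) (volume.restrict (Set.Ioo (0:ℝ) 1)) := by
      have h0 : MeasurePreserving (fun t : ℝ => 1 - t) volume volume :=
        Measure.measurePreserving_sub_left volume 1
      have h1 := h0.restrict_preimage (s := Set.Ioo (0:ℝ) 1) measurableSet_Ioo
      have h2 : (fun t : ℝ => 1 - t) ⁻¹' (Set.Ioo (0:ℝ) 1) = Set.Ioo (0:ℝ) 1 := by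
        ext t; constructor <;> (intro ht; simp only [Set.mem_preimage, Set.mem_Ioo] at *; constructor <;> linarith [ht.1, ht.2])
      rwa [h2] at h1
    exact (hmp.measure_preimage ((hme' hs).nullMeasurableSet)).symm ▸ rfl
  calc
    (∑' e : V × V,
        (Measure.map (fun t => (e, t))
          ((ENNReal.ofReal (N.c e.1 e.2 / 2)) • (volume.restrict (Set.Ioo (0:ℝ) 1))))
            (eFlip ⁻¹' s))
        = ∑' e : V × V,
          (Measure.map (fun t => ((e.2, e.1), t))
            ((ENNReal.ofReal (N.c e.2 e.1 / 2)) • (volume.restrict (Set.Ioo (0:ℝ) 1)))) s :=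
      tsum_congr key
    _ = ∑' e : V × V,
          (Measure.map (fun t => (e, t))
            ((ENNReal.ofReal (N.c e.1 e.2 / 2)) • (volume.restrict (Set.Ioo (0:ℝ) 1)))) s :=
      (Equiv.prodComm V V).tsum_eq fun e =>
        (Measure.map (fun t => (e, t))
          ((ENNReal.ofReal (N.c e.1 e.2 / 2)) • (volume.restrict (Set.Ioo (0:ℝ) 1)))) s

/-- The continuous linear map `F ↦ F ∘ σ` induced by the edge-orientation flip. -/
def flipOp (N : Network V) : Lp ℂ 2 N.edgeMeasure →L[ℂ] Lp ℂ 2 N.edgeMeasure :=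
  (Lp.compMeasurePreservingₗᵢ (E := ℂ) (p := 2) ℂ (eFlip (V := V))
    N.measurePreserving_eFlip).toContinuousLinearMap

/-- The Hilbert space `L²(X¹, m¹)` of square-integrable functions on the metric graph,
realized as the subspace of `L²` functions on oriented edges which are compatible with
the identification `(xy,t) ≡ (yx, 1-t)`. -/
def L2X (N : Network V) : Submodule ℂ (Lp ℂ 2 N.edgeMeasure) :=
  LinearMap.ker ((N.flipOp - ContinuousLinearMap.id ℂ (Lp ℂ 2 N.edgeMeasure) :
    Lp ℂ 2 N.edgeMeasure →ₗ[ℂ] Lp ℂ 2 N.edgeMeasure))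

theorem isClosed_L2X (N : Network V) : IsClosed (N.L2X : Set (Lp ℂ 2 N.edgeMeasure)) :=
  ContinuousLinearMap.isClosed_ker (N.flipOp - ContinuousLinearMap.id ℂ (Lp ℂ 2 N.edgeMeasure))

instance (N : Network V) : CompleteSpace N.L2X :=
  (isClosed_L2X N).completeSpace_coe

end Network

namespace Network

variable {V : Type} [Countable V] [MeasurableSpace V] [DiscreteMeasurableSpace V]

/-- The value of (a representative of) `F ∈ L²(X¹,m¹)` at the point of the edge `[x,y]`
at distance `t` from `x`. -/
def edgeFun (N : Network V) (F : Lp ℂ 2 N.edgeMeasure) (x y : V) (t : ℝ) : ℂ :=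
  F ((x, y), t)

/-- The counting measure on vertices weighted by `m⁰`; `ℓ²(X⁰,m⁰) = Lp ℂ 2 N.vertexMeasure`. -/
def vertexMeasure (N : Network V) : Measure V :=
  Measure.sum fun x => (ENNReal.ofReal (N.m0 x)) • Measure.dirac x

/-- The averaging operator, at the level of functions. -/
def avgFun (N : Network V) (f : V → V → ℝ → ℂ) (x y : V) (t : ℝ) : ℂ :=
  (N.m0 x : ℂ)⁻¹ * (∑' u, (N.c x u : ℂ) * (∫ s in (0:ℝ)..(1 - t), f x u s))
    + (N.m0 y : ℂ)⁻¹ * (∑' v, (N.c y v : ℂ) * (∫ s in (0:ℝ)..t, f y v s))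

/-- `f, g, h` are (continuous versions of) an element of `Ĥ²(X¹,m¹)` together with its first
and second edgewise derivatives: on each edge, `g` is the derivative of `f` and `h` the
derivative of `g` (in the sense of absolutely continuous functions, via the fundamental
theorem of calculus), and `f`, `g`, `h` are square-integrable on the metric graph. -/
structure IsH2Rep (N : Network V) (f g h : V → V → ℝ → ℂ) : Prop where
  ftc₁ : ∀ x y, N.adj x y → ∀ t ∈ Set.Icc (0:ℝ) 1,
    f x y t = f x y 0 + ∫ s in (0:ℝ)..t, g x y s
  ftc₂ : ∀ x y, N.adj x y → ∀ t ∈ Set.Icc (0:ℝ) 1,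
    g x y t = g x y 0 + ∫ s in (0:ℝ)..t, h x y s
  intervalIntegrable_g : ∀ x y, N.adj x y → IntervalIntegrable (g x y) volume 0 1
  intervalIntegrable_h : ∀ x y, N.adj x y → IntervalIntegrable (h x y) volume 0 1
  memL2_f : MemLp (fun p : (V × V) × ℝ => f p.1.1 p.1.2 p.2) 2 N.edgeMeasure
  memL2_g : MemLp (fun p : (V × V) × ℝ => g p.1.1 p.1.2 p.2) 2 N.edgeMeasure
  memL2_h : MemLp (fun p : (V × V) × ℝ => h p.1.1 p.1.2 p.2) 2 N.edgeMeasure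

/-- The graph of the operator `S = -d²/dt²` with domain the functions in `Ĥ²(X¹,m¹)` which are
continuous at the vertices: `(F, G) ∈ graph S` iff `F` has an edgewise `H²` representative
`f` (with derivatives `g`, `h`), `f` is continuous at each vertex, and `G = -f''`. -/
def SGraph (N : Network V) (F G : N.L2X) : Prop :=
  ∃ f g h : V → V → ℝ → ℂ, N.IsH2Rep f g h ∧
    (⇑(F : Lp ℂ 2 N.edgeMeasure) =ᵐ[N.edgeMeasure] fun p => f p.1.1 p.1.2 p.2) ∧
    (∀ x u v, N.adj x u → N.adj x v → f x u 0 = f x v 0) ∧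
    (⇑(G : Lp ℂ 2 N.edgeMeasure) =ᵐ[N.edgeMeasure] fun p => -(h p.1.1 p.1.2 p.2))

/-- The graph of the (Kirchhoff) Laplacian `L`: the restriction of `S` to the functions
satisfying moreover `F'(x) = ∑_{y∼x} c(xy) F'(xy,0+) = 0` at every vertex `x`. -/
def LGraph (N : Network V) (F G : N.L2X) : Prop :=
  ∃ f g h : V → V → ℝ → ℂ, N.IsH2Rep f g h ∧
    (⇑(F : Lp ℂ 2 N.edgeMeasure) =ᵐ[N.edgeMeasure] fun p => f p.1.1 p.1.2 p.2) ∧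
    (∀ x u v, N.adj x u → N.adj x v → f x u 0 = f x v 0) ∧
    (∀ x, Summable fun y => (N.c x y : ℂ) * g x y 0) ∧
    (∀ x, ∑' y, (N.c x y : ℂ) * g x y 0 = 0) ∧
    (⇑(G : Lp ℂ 2 N.edgeMeasure) =ᵐ[N.edgeMeasure] fun p => -(h p.1.1 p.1.2 p.2))

end Network

/-- The graph of the adjoint of a densely defined operator, described by its graph `T`:
`(G,K) ∈ graph T*` iff `⟪G, SF⟫ = ⟪K, F⟫` for all `(F, SF) ∈ T`. -/
def adjointGraph {H : Type*} [NormedAddCommGroup H] [InnerProductSpace ℂ H]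
    (T : Set (H × H)) : Set (H × H) :=
  {q | ∀ p ∈ T, (inner ℂ q.1 p.2 : ℂ) = inner ℂ q.2 p.1}

/-- A densely defined operator given by its graph `T` is self-adjoint if `T* = T`. -/
def IsSelfAdjointGraph {H : Type*} [NormedAddCommGroup H] [InnerProductSpace ℂ H]
    (T : Set (H × H)) : Prop :=
  Dense (Prod.fst '' T) ∧ adjointGraph T = T

/-- The entire function `Φ(z,t) = t` for `z = 0` and `sin(zt)/z` otherwise. -/
def Phi (z : ℂ) (t : ℝ) : ℂ := if z = 0 then (t : ℂ) else Complex.sin (z * t) / z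

namespace Network

variable {V : Type} [Countable V] [MeasurableSpace V] [DiscreteMeasurableSpace V]

/-- Iterated forward extension step for the d'Alembert extension: `fwdExt f n x y s`
represents `F̃(xy, s + n)` for `s ∈ (0,1]`. -/
def fwdExt (N : Network V) (f : V → V → ℝ → ℂ) : ℕ → V → V → ℝ → ℂ
  | 0 => f
  | (n+1) => fun x y s =>
      (2 / (N.m0 y) : ℂ) * ∑' v, (N.c y v : ℂ) * N.fwdExt f n y v s - N.fwdExt f n y x s

/-- Iterated backward extension step for the d'Alembert extension: `bwdExt f n x y s`
represents `F̃(xy, s - n)` for `s ∈ [0,1)`. -/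
def bwdExt (N : Network V) (f : V → V → ℝ → ℂ) : ℕ → V → V → ℝ → ℂ
  | 0 => f
  | (n+1) => fun x y s =>
      (2 / (N.m0 x) : ℂ) * ∑' u, (N.c x u : ℂ) * N.bwdExt f n u x s - N.bwdExt f n y x s

/-- The d'Alembert extension `F̃` of a function `F` on the metric graph: each edge component
`t ↦ F(xy,t)`, `t ∈ [0,1]`, is extended to the whole real line by the recursion
`F̃(xy,t) = (2/m⁰(y)) ∑_{v∼y} c(yv) F̃(yv,t-1) - F̃(yx,t-1)` for `t > 1` and
`F̃(xy,t) = (2/m⁰(x)) ∑_{u∼x} c(ux) F̃(ux,t+1) - F̃(yx,t+1)` for `t < 0`. -/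
def tilde (N : Network V) (f : V → V → ℝ → ℂ) (x y : V) (t : ℝ) : ℂ :=
  if 0 ≤ t ∧ t ≤ 1 then f x y t
  else if 1 < t then N.fwdExt f (⌈t⌉ - 1).toNat x y (t - ((⌈t⌉ - 1 : ℤ) : ℝ))
  else N.bwdExt f (-⌊t⌋).toNat x y (t + ((-⌊t⌋ : ℤ) : ℝ))

/-- The d'Alembert operator `C(τ)` at the level of functions. -/
def dAlembertFun (N : Network V) (f : V → V → ℝ → ℂ) (τ : ℝ) (x y : V) (t : ℝ) : ℂ :=
  (N.tilde f x y (t + τ) + N.tilde f x y (t - τ)) / 2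

/-- The squared norm `‖g‖²_{L²(X¹,m¹)} = (1/2) ∑_x ∑_{y} c(xy) ∫₀¹ |g(xy,t)|² dt`
(with values in `ℝ≥0∞`). -/
def normSq (N : Network V) (g : V → V → ℝ → ℂ) : ℝ≥0∞ :=
  (1/2 : ℝ≥0∞) * ∑' x, ∑' y, ENNReal.ofReal (N.c x y) *
    ∫⁻ t in Set.Ioo (0:ℝ) 1, ((‖g x y t‖₊ : ℝ≥0∞) ^ 2)

end Network

/-!
On an edge, integrating by parts twice turns `⟪F, -G''⟫ - ⟪-F'', G⟫` into the boundary terms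
`conj F · G' - conj F' · G` at the two endpoints. Since `F(xy,1) = F(yx,0)` and
`F'(xy,1) = -F'(yx,0)`, the endpoint `1` of the oriented edge `xy` contributes exactly what the
endpoint `0` of `yx` does, so the half-sum over oriented edges becomes the sum over all `(x,y)` of
`c(xy) (conj F(x) G'(xy,0) - conj F'(xy,0) G(x))`; grouped by vertices, this is the right-hand
side. All these double series converge absolutely because `F, F', F'', G, G', G''` lie in `L²`
and a boundary value is controlled by the edgewise `H¹` norm: `‖u 0‖² ≤ 2 (‖u‖² + ‖u'‖²)`.
-/

theorem ENNReal.mul_le_sq_add_sq (a b : ℝ≥0∞) : a * b ≤ a ^ 2 + b ^ 2 := by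
  rcases le_total a b with h | h
  · calc a * b ≤ b ^ 2 := by rw [sq]; gcongr
      _ ≤ a ^ 2 + b ^ 2 := le_add_self
  · calc a * b ≤ a ^ 2 := by rw [sq]; gcongr
      _ ≤ a ^ 2 + b ^ 2 := le_self_add

theorem ENNReal.add_sq_le (a b : ℝ≥0∞) : (a + b) ^ 2 ≤ 2 * (a ^ 2 + b ^ 2) := by
  have h := ENNReal.rpow_add_le_mul_rpow_add_rpow a b (p := 2) one_le_two
  norm_num [ENNReal.rpow_two] at h
  exact h

theorem sq_lintegral_le_lintegral_sq {α : Type*} [MeasurableSpace α] {μ : Measure α}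
    [IsProbabilityMeasure μ] {f : α → ℝ≥0∞} (hf : AEMeasurable f μ) :
    (∫⁻ x, f x ∂μ) ^ 2 ≤ ∫⁻ x, f x ^ 2 ∂μ := by
  have h := ENNReal.lintegral_mul_le_Lp_mul_Lq μ Real.HolderConjugate.two_two hf
    (aemeasurable_const (b := (1 : ℝ≥0∞)))
  simp only [Pi.mul_apply, mul_one, lintegral_const, measure_univ, ENNReal.rpow_two] at h
  calc (∫⁻ x, f x ∂μ) ^ 2 ≤ ((∫⁻ x, f x ^ 2 ∂μ) ^ (1 / 2 : ℝ)) ^ 2 := by gcongr; simpa using h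
    _ = ∫⁻ x, f x ^ 2 ∂μ := by
      rw [← ENNReal.rpow_natCast, ← ENNReal.rpow_mul]; norm_num

theorem tsum_tsum_half_sub_eq_tsum {α : Type*} {P Q Z : α × α → ℂ} (hP : Summable P)
    (hQ : Summable Q) (hZ : Summable Z) (h : ∀ e, P e - Q e = Z e + Z e.swap) :
    1 / 2 * ∑' x, ∑' y, P (x, y) - 1 / 2 * ∑' x, ∑' y, Q (x, y) = ∑' e, Z e := by
  have hZswap : Summable fun e : α × α => Z e.swap := (Equiv.prodComm α α).summable_iff.2 hZ
  have hswap : ∑' e : α × α, Z e.swap = ∑' e, Z e := (Equiv.prodComm α α).tsum_eq Z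
  rw [← hP.tsum_prod, ← hQ.tsum_prod, ← mul_sub, ← hP.tsum_sub hQ, tsum_congr h,
    hZ.tsum_add hZswap, hswap]
  ring

section Primitive

variable {E : Type*} [NormedAddCommGroup E] [NormedSpace ℝ E]

def IsPrimitiveOn (f g : ℝ → E) (a b : ℝ) : Prop :=
  IntervalIntegrable g volume a b ∧ ∀ t ∈ Icc a b, f t = f a + ∫ s in a..t, g s

variable {f g : ℝ → E} {a b : ℝ}

theorem IsPrimitiveOn.continuousOn (hf : IsPrimitiveOn f g a b) : ContinuousOn f (Icc a b) :=
  ((continuousOn_const.add (intervalIntegral.continuousOn_primitive_interval'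
    hf.1 left_mem_uIcc)).mono Icc_subset_uIcc).congr hf.2

theorem IsPrimitiveOn.hasDerivAt [CompleteSpace E] (hf : IsPrimitiveOn f g a b)
    (hg : ContinuousOn g (Icc a b)) {t : ℝ} (ht : t ∈ Ioo a b) : HasDerivAt f (g t) t := by
  have hint : IntervalIntegrable g volume a t :=
    hf.1.mono_set (uIcc_subset_uIcc_left (Icc_subset_uIcc (Ioo_subset_Icc_self ht)))
  have hderiv := (intervalIntegral.integral_hasDerivAt_right hint
    ((hg.mono Ioo_subset_Icc_self).stronglyMeasurableAtFilter isOpen_Ioo t ht)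
    (hg.continuousAt (Icc_mem_nhds ht.1 ht.2))).const_add (f a)
  refine hderiv.congr_of_eventuallyEq ?_
  filter_upwards [Icc_mem_nhds ht.1 ht.2] with s hs using hf.2 s hs

theorem IsPrimitiveOn.eq_neg_of_eq_comp_one_sub [CompleteSpace E] {f₁ g₁ f₂ g₂ : ℝ → E}
    (hf₁ : IsPrimitiveOn f₁ g₁ 0 1) (hf₂ : IsPrimitiveOn f₂ g₂ 0 1)
    (hg₁ : ContinuousOn g₁ (Icc 0 1)) (hg₂ : ContinuousOn g₂ (Icc 0 1))
    (h : ∀ t ∈ Icc (0:ℝ) 1, f₁ t = f₂ (1 - t)) :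
    ∀ t ∈ Icc (0:ℝ) 1, g₁ t = -g₂ (1 - t) := by
  have hmaps : MapsTo (fun t : ℝ => 1 - t) (Icc 0 1) (Icc 0 1) :=
    fun t ht => ⟨by linarith [ht.2], by linarith [ht.1]⟩
  have hIoo : EqOn g₁ (fun t => -g₂ (1 - t)) (Ioo 0 1) := fun t ht => by
    have ht' : 1 - t ∈ Ioo (0:ℝ) 1 := ⟨by linarith [ht.2], by linarith [ht.1]⟩
    have h₂ : HasDerivAt (fun s => f₂ (1 - s)) (-g₂ (1 - t)) t := by
      simpa [Function.comp_def] using (hf₂.hasDerivAt hg₂ ht').scomp t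
        ((hasDerivAt_id t).const_sub 1)
    refine (hf₁.hasDerivAt hg₁ ht).unique (h₂.congr_of_eventuallyEq ?_)
    filter_upwards [Icc_mem_nhds ht.1 ht.2] with s hs using h s hs
  refine hIoo.of_subset_closure hg₁ (hg₂.comp (by fun_prop) hmaps).neg Ioo_subset_Icc_self ?_
  rw [closure_Ioo zero_ne_one]

end Primitive

section IntegrationByParts

variable {a b : ℝ}

theorem setIntegral_Iic_restrict_Ioc {u : ℝ → ℂ} {t : ℝ} (hat : a ≤ t) (htb : t ≤ b) :
    ∫ s in Iic t, u s ∂(volume.restrict (Ioc a b)) = ∫ s in a..t, u s := by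
  rw [Measure.restrict_restrict measurableSet_Iic, Iic_inter_Ioc_of_le htb,
    intervalIntegral.integral_of_le hat]

/-- Fubini on the square `(a,b]²`: the part of `u s * v t` below the diagonal gives the first
integral, the part above it the second. -/
theorem integral_primitive_mul_add_mul_primitive {u v : ℝ → ℂ} (hab : a ≤ b)
    (hu : IntervalIntegrable u volume a b) (hv : IntervalIntegrable v volume a b) :
    (∫ t in a..b, (∫ s in a..t, u s) * v t) + (∫ t in a..b, u t * ∫ s in a..t, v s)
      = (∫ t in a..b, u t) * ∫ t in a..b, v t := by
  set μ := volume.restrict (Ioc a b)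
  have hu' : Integrable u μ := (intervalIntegrable_iff_integrableOn_Ioc_of_le hab).1 hu
  have hv' : Integrable v μ := (intervalIntegrable_iff_integrableOn_Ioc_of_le hab).1 hv
  set T : Set (ℝ × ℝ) := {p | p.1 ≤ p.2}
  have hT : MeasurableSet T := measurableSet_le measurable_fst measurable_snd
  have hK : Integrable (fun p : ℝ × ℝ => u p.1 * v p.2) (μ.prod μ) := hu'.mul_prod hv'
  have below : ∫ p in T, u p.1 * v p.2 ∂(μ.prod μ) = ∫ t in a..b, (∫ s in a..t, u s) * v t := by
    rw [← integral_indicator hT, integral_prod_symm _ (hK.indicator hT),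
      intervalIntegral.integral_of_le hab]
    refine setIntegral_congr_fun measurableSet_Ioc fun t ht => ?_
    have : (fun s => T.indicator (fun p : ℝ × ℝ => u p.1 * v p.2) (s, t))
        = (Iic t).indicator fun s => u s * v t := by
      ext s; by_cases hst : s ≤ t <;> simp [T, hst]
    simp only [this, integral_indicator measurableSet_Iic, integral_mul_const]
    exact congrArg (· * v t) (setIntegral_Iic_restrict_Ioc ht.1.le ht.2)
  have above : ∫ p in Tᶜ, u p.1 * v p.2 ∂(μ.prod μ) = ∫ t in a..b, u t * ∫ s in a..t, v s := by
    rw [← integral_indicator hT.compl, integral_prod _ (hK.indicator hT.compl),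
      intervalIntegral.integral_of_le hab]
    refine setIntegral_congr_fun measurableSet_Ioc fun s hs => ?_
    have : (fun t => Tᶜ.indicator (fun p : ℝ × ℝ => u p.1 * v p.2) (s, t))
        = (Iio s).indicator fun t => u s * v t := by
      ext t; by_cases hts : t < s <;> simp [T, hts]
    simp only [this, integral_indicator measurableSet_Iio, integral_const_mul,
      setIntegral_congr_set Iio_ae_eq_Iic]
    exact congrArg (u s * ·) (setIntegral_Iic_restrict_Ioc hs.1.le hs.2)
  rw [← below, ← above, integral_add_compl hT hK, integral_prod_mul,
    intervalIntegral.integral_of_le hab, intervalIntegral.integral_of_le hab]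

theorem IsPrimitiveOn.star {f g : ℝ → ℂ} (hf : IsPrimitiveOn f g a b) :
    IsPrimitiveOn (fun t => starRingEnd ℂ (f t)) (fun t => starRingEnd ℂ (g t)) a b :=
  ⟨⟨Complex.conjCLE.toContinuousLinearMap.integrable_comp hf.1.1,
    Complex.conjCLE.toContinuousLinearMap.integrable_comp hf.1.2⟩,
   fun t ht => by simp only [hf.2 t ht, map_add, intervalIntegral.intervalIntegral_conj]⟩

theorem IsPrimitiveOn.intervalIntegrable_mul {U u v : ℝ → ℂ} (hab : a ≤ b)
    (hU : IsPrimitiveOn U u a b) (hv : IntervalIntegrable v volume a b) :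
    IntervalIntegrable (fun t => U t * v t) volume a b :=
  hv.continuousOn_mul (by rw [uIcc_of_le hab]; exact hU.continuousOn)

theorem IsPrimitiveOn.integral_mul_add_mul {U u V v : ℝ → ℂ} (hab : a ≤ b)
    (hU : IsPrimitiveOn U u a b) (hV : IsPrimitiveOn V v a b) :
    ∫ t in a..b, (U t * v t + u t * V t) = U b * V b - U a * V a := by
  have hP : ∀ {w : ℝ → ℂ}, IntervalIntegrable w volume a b →
      IsPrimitiveOn (fun t => ∫ s in a..t, w s) w a b := fun hw => ⟨hw, fun t _ => by simp⟩
  have i₁ : IntervalIntegrable (fun t => U a * v t + u t * V a) volume a b :=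
    (hV.1.const_mul _).add (hU.1.mul_const _)
  have i₂ := (hP hU.1).intervalIntegrable_mul hab hV.1
  have i₃ := hU.1.mul_continuousOn (by rw [uIcc_of_le hab]; exact (hP hV.1).continuousOn)
  have hsplit : EqOn (fun t => U t * v t + u t * V t) (fun t => (U a * v t + u t * V a) +
      ((∫ s in a..t, u s) * v t + u t * ∫ s in a..t, v s)) (uIcc a b) := fun t ht => by
    rw [uIcc_of_le hab] at ht
    simp only [hU.2 t ht, hV.2 t ht]; ring
  rw [intervalIntegral.integral_congr hsplit, intervalIntegral.integral_add i₁ (i₂.add i₃),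
    intervalIntegral.integral_add i₂ i₃, integral_primitive_mul_add_mul_primitive hab hU.1 hV.1,
    intervalIntegral.integral_add (hV.1.const_mul _) (hU.1.mul_const _),
    intervalIntegral.integral_const_mul, intervalIntegral.integral_mul_const,
    hU.2 b ⟨hab, le_rfl⟩, hV.2 b ⟨hab, le_rfl⟩]
  ring

theorem green_identity_interval {f₁ g₁ h₁ f₂ g₂ h₂ : ℝ → ℂ} (hab : a ≤ b)
    (hf₁ : IsPrimitiveOn f₁ g₁ a b) (hg₁ : IsPrimitiveOn g₁ h₁ a b)
    (hf₂ : IsPrimitiveOn f₂ g₂ a b) (hg₂ : IsPrimitiveOn g₂ h₂ a b) :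
    (∫ t in a..b, starRingEnd ℂ (f₁ t) * -h₂ t) - ∫ t in a..b, starRingEnd ℂ (-h₁ t) * f₂ t
      = (starRingEnd ℂ (f₁ a) * g₂ a - starRingEnd ℂ (g₁ a) * f₂ a)
        - (starRingEnd ℂ (f₁ b) * g₂ b - starRingEnd ℂ (g₁ b) * f₂ b) := by
  have i₁ := hf₁.star.intervalIntegrable_mul hab hg₂.1
  have i₂ := hg₁.star.intervalIntegrable_mul hab hf₂.1
  have i₃ : IntervalIntegrable (fun t => starRingEnd ℂ (h₁ t) * f₂ t) volume a b := by
    simpa only [mul_comm] using hf₂.intervalIntegrable_mul hab hg₁.star.1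
  have ibp₁ := hf₁.star.integral_mul_add_mul hab hg₂
  have ibp₂ := hg₁.star.integral_mul_add_mul hab hf₂
  rw [intervalIntegral.integral_add i₁ i₂] at ibp₁
  rw [intervalIntegral.integral_add i₂ i₃] at ibp₂
  simp only [mul_neg, map_neg, neg_mul, intervalIntegral.integral_neg]
  linear_combination ibp₂ - ibp₁

end IntegrationByParts

section UnitInterval

variable {E : Type*} [NormedAddCommGroup E]

def unitNormSq (φ : ℝ → E) : ℝ≥0∞ := ∫⁻ t in Ioo 0 1, ‖φ t‖ₑ ^ 2

theorem enorm_integral_le_unitNormSq_add {E' G : Type*} [NormedAddCommGroup E']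
    [NormedAddCommGroup G] [NormedSpace ℝ G] {F : ℝ → G} {φ : ℝ → E} {ψ : ℝ → E'}
    (hφ : AEStronglyMeasurable φ (volume.restrict (Ioo 0 1)))
    (hF : ∀ t, ‖F t‖ₑ ≤ ‖φ t‖ₑ * ‖ψ t‖ₑ) :
    ‖∫ t in (0:ℝ)..1, F t‖ₑ ≤ unitNormSq φ + unitNormSq ψ :=
  calc ‖∫ t in (0:ℝ)..1, F t‖ₑ ≤ ∫⁻ t in Ioc 0 1, ‖F t‖ₑ := by
        rw [intervalIntegral.integral_of_le zero_le_one]; exact enorm_integral_le_lintegral_enorm _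
    _ = ∫⁻ t in Ioo 0 1, ‖F t‖ₑ := setLIntegral_congr Ioo_ae_eq_Ioc.symm
    _ ≤ ∫⁻ t in Ioo 0 1, (‖φ t‖ₑ ^ 2 + ‖ψ t‖ₑ ^ 2) :=
        lintegral_mono fun t => (hF t).trans (ENNReal.mul_le_sq_add_sq _ _)
    _ = unitNormSq φ + unitNormSq ψ := lintegral_add_left' (hφ.enorm.pow_const 2) _

theorem IsPrimitiveOn.enorm_sq_le [NormedSpace ℝ E] {f g : ℝ → E} (hf : IsPrimitiveOn f g 0 1) :
    ‖f 0‖ₑ ^ 2 ≤ 2 * (unitNormSq f + unitNormSq g) := by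
  have : IsProbabilityMeasure (volume.restrict (Ioo (0:ℝ) 1)) := ⟨by simp⟩
  set C := ∫⁻ s in Ioo 0 1, ‖g s‖ₑ
  have hpt : ∀ t ∈ Ioo (0:ℝ) 1, ‖f 0‖ₑ ≤ ‖f t‖ₑ + C := fun t ht => by
    have hint : ‖∫ s in (0:ℝ)..t, g s‖ₑ ≤ C := calc
      _ ≤ ∫⁻ s in Ioc 0 t, ‖g s‖ₑ := by
        rw [intervalIntegral.integral_of_le ht.1.le]; exact enorm_integral_le_lintegral_enorm _
      _ ≤ ∫⁻ s in Ioc 0 1, ‖g s‖ₑ := lintegral_mono_set (Ioc_subset_Ioc_right ht.2.le)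
      _ = C := setLIntegral_congr Ioo_ae_eq_Ioc.symm
    calc ‖f 0‖ₑ = ‖f t - ∫ s in (0:ℝ)..t, g s‖ₑ := by
          rw [hf.2 t (Ioo_subset_Icc_self ht), add_sub_cancel_right]
      _ ≤ ‖f t‖ₑ + C := enorm_sub_le.trans (by gcongr)
  have hg : AEStronglyMeasurable g (volume.restrict (Ioo 0 1)) :=
    hf.1.1.aestronglyMeasurable.mono_measure (Measure.restrict_mono Ioo_subset_Ioc_self le_rfl)
  have hC : C ^ 2 ≤ unitNormSq g := sq_lintegral_le_lintegral_sq hg.enorm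
  calc ‖f 0‖ₑ ^ 2 = ∫⁻ _ in Ioo (0:ℝ) 1, ‖f 0‖ₑ ^ 2 := by simp
    _ ≤ ∫⁻ t in Ioo (0:ℝ) 1, 2 * (‖f t‖ₑ ^ 2 + C ^ 2) := setLIntegral_mono' measurableSet_Ioo
        fun t ht => (pow_le_pow_left₀ zero_le (hpt t ht) 2).trans (ENNReal.add_sq_le _ _)
    _ = 2 * (unitNormSq f + C ^ 2) := by
        rw [lintegral_const_mul' _ _ ENNReal.ofNat_ne_top, lintegral_add_right _ measurable_const]
        simp [unitNormSq]
    _ ≤ 2 * (unitNormSq f + unitNormSq g) := by gcongr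

end UnitInterval

namespace Network

variable {V : Type} (N : Network V)

theorem c_nonneg (x y : V) : 0 ≤ N.c x y := by
  by_cases h : N.adj x y
  · exact (N.c_pos x y h).le
  · rw [N.c_eq_zero x y h]

theorem c_eq_zero_of_m0_eq_zero {x : V} (hx : N.m0 x = 0) (y : V) : N.c x y = 0 := by
  have h := (N.c_summable x).hasSum
  rw [show ∑' y, N.c x y = N.m0 x from rfl, hx] at h
  exact congrFun ((hasSum_zero_iff_of_nonneg (N.c_nonneg x)).1 h) y

/-- This holds also where `m0 x = 0` and `⁻¹` returns its junk value `0`: there all `c x y`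
vanish. -/
theorem m0_mul_inv_mul_tsum (x : V) (a : V → ℂ) :
    (N.m0 x : ℂ) * ((N.m0 x : ℂ)⁻¹ * ∑' y, (N.c x y : ℂ) * a y) = ∑' y, (N.c x y : ℂ) * a y := by
  by_cases hx : N.m0 x = 0
  · simp [hx, N.c_eq_zero_of_m0_eq_zero hx]
  · exact mul_inv_cancel_left₀ (Complex.ofReal_ne_zero.2 hx) _

theorem tsum_c_mul_congr {x : V} {a b : V → ℂ} (h : ∀ y, N.adj x y → a y = b y) :
    ∑' y, (N.c x y : ℂ) * a y = ∑' y, (N.c x y : ℂ) * b y :=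
  tsum_congr fun y => by
    by_cases hxy : N.adj x y
    · rw [h y hxy]
    · simp [N.c_eq_zero x y hxy]

theorem m0_mul_conj_mul_inv_mul_tsum {x : V} {φ : ℂ} {a b : V → ℂ}
    (h : ∀ y, N.adj x y → φ = b y) :
    (N.m0 x : ℂ) * starRingEnd ℂ φ * ((N.m0 x : ℂ)⁻¹ * ∑' y, (N.c x y : ℂ) * a y)
      = ∑' y, (N.c x y : ℂ) * (starRingEnd ℂ (b y) * a y) := by
  rw [mul_comm (N.m0 x : ℂ), mul_assoc, m0_mul_inv_mul_tsum, ← tsum_mul_left]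
  calc ∑' y, starRingEnd ℂ φ * ((N.c x y : ℂ) * a y)
      = ∑' y, (N.c x y : ℂ) * (starRingEnd ℂ φ * a y) := tsum_congr fun y => by ring
    _ = _ := N.tsum_c_mul_congr fun y hxy => by rw [h y hxy]

theorem m0_mul_conj_inv_mul_tsum_mul {x : V} {φ : ℂ} {a b : V → ℂ}
    (h : ∀ y, N.adj x y → φ = b y) :
    (N.m0 x : ℂ) * starRingEnd ℂ ((N.m0 x : ℂ)⁻¹ * ∑' y, (N.c x y : ℂ) * a y) * φ
      = ∑' y, (N.c x y : ℂ) * (starRingEnd ℂ (a y) * b y) := by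
  have hconj : (N.m0 x : ℂ) * starRingEnd ℂ ((N.m0 x : ℂ)⁻¹ * ∑' y, (N.c x y : ℂ) * a y)
      = starRingEnd ℂ ((N.m0 x : ℂ) * ((N.m0 x : ℂ)⁻¹ * ∑' y, (N.c x y : ℂ) * a y)) := by
    rw [map_mul _ (N.m0 x : ℂ), Complex.conj_ofReal]
  rw [hconj, m0_mul_inv_mul_tsum, Complex.conj_tsum, ← tsum_mul_right]
  calc ∑' y, starRingEnd ℂ ((N.c x y : ℂ) * a y) * φ
      = ∑' y, (N.c x y : ℂ) * (starRingEnd ℂ (a y) * φ) :=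
        tsum_congr fun y => by rw [map_mul, Complex.conj_ofReal, mul_assoc]
    _ = _ := N.tsum_c_mul_congr fun y hxy => by rw [h y hxy]

theorem lintegral_edgeMeasure [MeasurableSpace V] [MeasurableSingletonClass V]
    (F : (V × V) × ℝ → ℝ≥0∞) :
    ∫⁻ p, F p ∂N.edgeMeasure
      = ∑' e : V × V, ENNReal.ofReal (N.c e.1 e.2 / 2) * ∫⁻ t in Ioo 0 1, F (e, t) := by
  rw [edgeMeasure, lintegral_sum_measure]
  congr 1 with e
  rw [(measurableEmbedding_prodMk_left e).lintegral_map, lintegral_smul_measure, smul_eq_mul]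

theorem normSq_eq_tsum (f : V → V → ℝ → ℂ) :
    N.normSq f = 2⁻¹ * ∑' e : V × V, ENNReal.ofReal (N.c e.1 e.2) * unitNormSq (f e.1 e.2) := by
  rw [normSq, ENNReal.tsum_prod', one_div]
  rfl

theorem lintegral_edgeMeasure_enorm_sq [MeasurableSpace V] [MeasurableSingletonClass V]
    (f : V → V → ℝ → ℂ) :
    ∫⁻ p, ‖f p.1.1 p.1.2 p.2‖ₑ ^ 2 ∂N.edgeMeasure = N.normSq f := by
  rw [lintegral_edgeMeasure, normSq_eq_tsum, ← ENNReal.tsum_mul_left]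
  congr 1 with e
  rw [ENNReal.ofReal_div_of_pos two_pos, ENNReal.ofReal_ofNat, div_eq_mul_inv, mul_comm _ 2⁻¹,
    mul_assoc]
  rfl

theorem normSq_ne_top [MeasurableSpace V] [MeasurableSingletonClass V] {f : V → V → ℝ → ℂ}
    (hf : MemLp (fun p : (V × V) × ℝ => f p.1.1 p.1.2 p.2) 2 N.edgeMeasure) : N.normSq f ≠ ⊤ := by
  have h := lintegral_rpow_enorm_lt_top_of_eLpNorm_lt_top two_ne_zero ofNat_ne_top hf.eLpNorm_lt_top
  simp only [toReal_ofNat, ENNReal.rpow_two, lintegral_edgeMeasure_enorm_sq] at h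
  exact h.ne

theorem tsum_c_mul_unitNormSq_ne_top {f : V → V → ℝ → ℂ} (hf : N.normSq f ≠ ⊤) :
    ∑' e : V × V, ENNReal.ofReal (N.c e.1 e.2) * unitNormSq (f e.1 e.2) ≠ ⊤ := by
  rw [normSq_eq_tsum] at hf
  intro h
  rw [h, ENNReal.mul_top (by norm_num)] at hf
  exact hf rfl

theorem tsum_c_mul_add_ne_top {B B' : V × V → ℝ≥0∞}
    (h : ∑' e : V × V, ENNReal.ofReal (N.c e.1 e.2) * B e ≠ ⊤)
    (h' : ∑' e : V × V, ENNReal.ofReal (N.c e.1 e.2) * B' e ≠ ⊤) :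
    ∑' e : V × V, ENNReal.ofReal (N.c e.1 e.2) * (B e + B' e) ≠ ⊤ := by
  simp_rw [mul_add]
  rw [ENNReal.tsum_add]
  exact add_ne_top.2 ⟨h, h'⟩

theorem tsum_c_mul_const_mul_ne_top {B : V × V → ℝ≥0∞} {K : ℝ≥0∞} (hK : K ≠ ⊤)
    (h : ∑' e : V × V, ENNReal.ofReal (N.c e.1 e.2) * B e ≠ ⊤) :
    ∑' e : V × V, ENNReal.ofReal (N.c e.1 e.2) * (K * B e) ≠ ⊤ := by
  simp_rw [mul_left_comm _ K]
  rw [ENNReal.tsum_mul_left]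
  exact mul_ne_top hK h

theorem summable_c_mul {b : V × V → ℂ} {B : V × V → ℝ≥0∞}
    (hB : ∑' e : V × V, ENNReal.ofReal (N.c e.1 e.2) * B e ≠ ⊤)
    (hb : ∀ e : V × V, N.adj e.1 e.2 → ‖b e‖ₑ ≤ B e) :
    Summable fun e : V × V => (N.c e.1 e.2 : ℂ) * b e := by
  refine Summable.of_enorm (ne_top_of_le_ne_top hB (ENNReal.tsum_le_tsum fun e => ?_))
  by_cases h : N.adj e.1 e.2
  · rw [enorm_mul, ← ofReal_norm, Complex.norm_real, Real.norm_of_nonneg (N.c_nonneg _ _)]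
    gcongr
    exact hb e h
  · simp [N.c_eq_zero _ _ h]

theorem summable_c_mul_integral {u w F : V → V → ℝ → ℂ} (hu : N.normSq u ≠ ⊤)
    (hw : N.normSq w ≠ ⊤)
    (hwm : ∀ x y, N.adj x y → AEStronglyMeasurable (w x y) (volume.restrict (Ioo 0 1)))
    (hF : ∀ x y t, ‖F x y t‖ₑ ≤ ‖w x y t‖ₑ * ‖u x y t‖ₑ) :
    Summable fun e : V × V => (N.c e.1 e.2 : ℂ) * ∫ t in (0:ℝ)..1, F e.1 e.2 t :=
  N.summable_c_mul (b := fun e => ∫ t in (0:ℝ)..1, F e.1 e.2 t) (N.tsum_c_mul_add_ne_top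
    (N.tsum_c_mul_unitNormSq_ne_top hw) (N.tsum_c_mul_unitNormSq_ne_top hu))
    fun _ he => enorm_integral_le_unitNormSq_add (hwm _ _ he) (hF _ _)

theorem summable_c_mul_conj_mul {u u' w w' : V → V → ℝ → ℂ}
    (hu : ∀ x y, N.adj x y → IsPrimitiveOn (u x y) (u' x y) 0 1)
    (hw : ∀ x y, N.adj x y → IsPrimitiveOn (w x y) (w' x y) 0 1)
    (hu₂ : N.normSq u ≠ ⊤) (hu'₂ : N.normSq u' ≠ ⊤) (hw₂ : N.normSq w ≠ ⊤)
    (hw'₂ : N.normSq w' ≠ ⊤) :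
    Summable fun e : V × V => (N.c e.1 e.2 : ℂ) * (starRingEnd ℂ (u e.1 e.2 0) * w e.1 e.2 0) := by
  have hB := N.tsum_c_mul_add_ne_top
    (N.tsum_c_mul_const_mul_ne_top (ofNat_ne_top (n := 2)) (N.tsum_c_mul_add_ne_top
      (N.tsum_c_mul_unitNormSq_ne_top hu₂) (N.tsum_c_mul_unitNormSq_ne_top hu'₂)))
    (N.tsum_c_mul_const_mul_ne_top (ofNat_ne_top (n := 2)) (N.tsum_c_mul_add_ne_top
      (N.tsum_c_mul_unitNormSq_ne_top hw₂) (N.tsum_c_mul_unitNormSq_ne_top hw'₂)))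
  refine N.summable_c_mul (b := fun e => starRingEnd ℂ (u e.1 e.2 0) * w e.1 e.2 0) hB
    fun e he => ?_
  calc ‖starRingEnd ℂ (u e.1 e.2 0) * w e.1 e.2 0‖ₑ
        ≤ ‖u e.1 e.2 0‖ₑ ^ 2 + ‖w e.1 e.2 0‖ₑ ^ 2 := by
        rw [enorm_mul, RCLike.enorm_conj]; exact ENNReal.mul_le_sq_add_sq _ _
    _ ≤ _ := add_le_add (hu _ _ he).enorm_sq_le (hw _ _ he).enorm_sq_le

variable {N} [MeasurableSpace V] {f g h : V → V → ℝ → ℂ}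

theorem IsH2Rep.isPrimitiveOn_f (hfgh : N.IsH2Rep f g h) {x y : V} (hxy : N.adj x y) :
    IsPrimitiveOn (f x y) (g x y) 0 1 :=
  ⟨hfgh.intervalIntegrable_g x y hxy, hfgh.ftc₁ x y hxy⟩

theorem IsH2Rep.isPrimitiveOn_g (hfgh : N.IsH2Rep f g h) {x y : V} (hxy : N.adj x y) :
    IsPrimitiveOn (g x y) (h x y) 0 1 :=
  ⟨hfgh.intervalIntegrable_h x y hxy, hfgh.ftc₂ x y hxy⟩

theorem IsH2Rep.aestronglyMeasurable_h (hfgh : N.IsH2Rep f g h) (x y : V) (hxy : N.adj x y) :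
    AEStronglyMeasurable (h x y) (volume.restrict (Ioo 0 1)) :=
  (hfgh.intervalIntegrable_h x y hxy).1.aestronglyMeasurable.mono_measure
    (Measure.restrict_mono Ioo_subset_Ioc_self le_rfl)

theorem IsH2Rep.deriv_one_eq_neg (hfgh : N.IsH2Rep f g h)
    (hsymm : ∀ x y, N.adj x y → ∀ t ∈ Icc (0:ℝ) 1, f x y t = f y x (1 - t))
    {x y : V} (hxy : N.adj x y) : g x y 1 = -g y x 0 := by
  have hyx := N.adj_symm x y hxy
  simpa using (hfgh.isPrimitiveOn_f hxy).eq_neg_of_eq_comp_one_sub (hfgh.isPrimitiveOn_f hyx)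
    (hfgh.isPrimitiveOn_g hxy).continuousOn (hfgh.isPrimitiveOn_g hyx).continuousOn
    (hsymm x y hxy) 1 ⟨zero_le_one, le_rfl⟩

theorem IsH2Rep.green_edge {fF gF hF fG gG hG : V → V → ℝ → ℂ}
    (hrepF : N.IsH2Rep fF gF hF) (hrepG : N.IsH2Rep fG gG hG)
    (hsymmF : ∀ x y, N.adj x y → ∀ t ∈ Icc (0:ℝ) 1, fF x y t = fF y x (1 - t))
    (hsymmG : ∀ x y, N.adj x y → ∀ t ∈ Icc (0:ℝ) 1, fG x y t = fG y x (1 - t)) (x y : V) :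
    (N.c x y : ℂ) * (∫ t in (0:ℝ)..1, starRingEnd ℂ (fF x y t) * -hG x y t)
      - (N.c x y : ℂ) * ∫ t in (0:ℝ)..1, starRingEnd ℂ (-hF x y t) * fG x y t
      = (N.c x y : ℂ) * (starRingEnd ℂ (fF x y 0) * gG x y 0 - starRingEnd ℂ (gF x y 0) * fG x y 0)
        + (N.c y x : ℂ) *
          (starRingEnd ℂ (fF y x 0) * gG y x 0 - starRingEnd ℂ (gF y x 0) * fG y x 0) := by
  by_cases hxy : N.adj x y
  · have hF1 : fF x y 1 = fF y x 0 := by simpa using hsymmF x y hxy 1 ⟨zero_le_one, le_rfl⟩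
    have hG1 : fG x y 1 = fG y x 0 := by simpa using hsymmG x y hxy 1 ⟨zero_le_one, le_rfl⟩
    rw [← mul_sub, green_identity_interval zero_le_one (hrepF.isPrimitiveOn_f hxy)
      (hrepF.isPrimitiveOn_g hxy) (hrepG.isPrimitiveOn_f hxy) (hrepG.isPrimitiveOn_g hxy),
      hF1, hG1, hrepF.deriv_one_eq_neg hsymmF hxy, hrepG.deriv_one_eq_neg hsymmG hxy, N.c_symm y x]
    simp only [map_neg]
    ring
  · simp [N.c_eq_zero x y hxy, N.c_eq_zero y x fun h => hxy (N.adj_symm y x h)]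

end Network

/-- `F, G` are given by edgewise-`H²` representatives `fF, fG` with first and second derivatives
`gF, hF` and `gG, hG` and vertex values `φF = ΓF`, `φG = ΓG`; thus `SF = -hF`, `SG = -hG`,
`Γ'G = (m0 x)⁻¹ ∑' y, c x y * gG x y 0`, and the inner products are written out
(conjugate-linear in the first argument). -/
theorem green_identity_general
    {V : Type} [MeasurableSpace V] [DiscreteMeasurableSpace V]
    (N : Network V)
    (fF gF hF fG gG hG : V → V → ℝ → ℂ)
    (hrepF : N.IsH2Rep fF gF hF) (hrepG : N.IsH2Rep fG gG hG)
    (hsymmF : ∀ x y, N.adj x y → ∀ t ∈ Set.Icc (0:ℝ) 1, fF x y t = fF y x (1 - t))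
    (hsymmG : ∀ x y, N.adj x y → ∀ t ∈ Set.Icc (0:ℝ) 1, fG x y t = fG y x (1 - t))
    (φF φG : V → ℂ)
    (hφF : ∀ x y, N.adj x y → φF x = fF x y 0)
    (hφG : ∀ x y, N.adj x y → φG x = fG x y 0) :
    ((1/2 : ℂ) * ∑' x, ∑' y, (N.c x y : ℂ) *
        ∫ t in (0:ℝ)..1, (starRingEnd ℂ) (fF x y t) * (-(hG x y t)))
      - ((1/2 : ℂ) * ∑' x, ∑' y, (N.c x y : ℂ) *
        ∫ t in (0:ℝ)..1, (starRingEnd ℂ) (-(hF x y t)) * fG x y t)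
    = (∑' x, (N.m0 x : ℂ) * (starRingEnd ℂ) (φF x) *
        ((N.m0 x : ℂ)⁻¹ * ∑' y, (N.c x y : ℂ) * gG x y 0))
      - (∑' x, (N.m0 x : ℂ) *
          (starRingEnd ℂ) ((N.m0 x : ℂ)⁻¹ * ∑' y, (N.c x y : ℂ) * gF x y 0) * φG x) := by
  have hP := N.summable_c_mul_integral (F := fun x y t => starRingEnd ℂ (fF x y t) * -hG x y t)
    (N.normSq_ne_top hrepF.memL2_f) (N.normSq_ne_top hrepG.memL2_h) hrepG.aestronglyMeasurable_h
    fun x y t => by simp [enorm_mul, mul_comm]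
  have hQ := N.summable_c_mul_integral (F := fun x y t => starRingEnd ℂ (-hF x y t) * fG x y t)
    (N.normSq_ne_top hrepG.memL2_f) (N.normSq_ne_top hrepF.memL2_h) hrepF.aestronglyMeasurable_h
    fun x y t => by simp [enorm_mul]
  have hA := N.summable_c_mul_conj_mul (fun _ _ => hrepF.isPrimitiveOn_f)
    (fun _ _ => hrepG.isPrimitiveOn_g) (N.normSq_ne_top hrepF.memL2_f)
    (N.normSq_ne_top hrepF.memL2_g) (N.normSq_ne_top hrepG.memL2_g) (N.normSq_ne_top hrepG.memL2_h)
  have hB := N.summable_c_mul_conj_mul (fun _ _ => hrepF.isPrimitiveOn_g)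
    (fun _ _ => hrepG.isPrimitiveOn_f) (N.normSq_ne_top hrepF.memL2_g)
    (N.normSq_ne_top hrepF.memL2_h) (N.normSq_ne_top hrepG.memL2_f) (N.normSq_ne_top hrepG.memL2_g)
  rw [tsum_tsum_half_sub_eq_tsum hP hQ (by simpa only [mul_sub] using hA.sub hB)
      fun e => hrepF.green_edge hrepG hsymmF hsymmG e.1 e.2,
    tsum_congr fun x => N.m0_mul_conj_mul_inv_mul_tsum (hφF x),
    tsum_congr fun x => N.m0_mul_conj_inv_mul_tsum_mul (hφG x),
    ← hA.tsum_prod, ← hB.tsum_prod, ← hA.tsum_sub hB]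
  simp only [mul_sub]

/-- For all `F, G ∈ dom S` there holds the Green identity
`⟨F,SG⟩_{L²(X¹,m¹)} - ⟨SF,G⟩_{L²(X¹,m¹)} = ⟨ΓF,Γ'G⟩_{ℓ²(X⁰,m⁰)} - ⟨Γ'F,ΓG⟩_{ℓ²(X⁰,m⁰)}`.
Here `F, G` are described by edgewise-`H²` representatives `fF, fG` (with first and second
derivatives `gF, hF` and `gG, hG`), continuous at the vertices with vertex values `φF, φG`
and compatible with the identification `(xy,t) ≡ (yx,1-t)`; `SF = -fF''`, `SG = -fG''`;
all inner products are written out explicitly (conjugate-linear in the first argument). -/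
theorem green_identity
    {V : Type} [Countable V] [MeasurableSpace V] [DiscreteMeasurableSpace V]
    (N : Network V)
    (fF gF hF fG gG hG : V → V → ℝ → ℂ)
    (hrepF : N.IsH2Rep fF gF hF) (hrepG : N.IsH2Rep fG gG hG)
    (hsymmF : ∀ x y, N.adj x y → ∀ t ∈ Set.Icc (0:ℝ) 1, fF x y t = fF y x (1 - t))
    (hsymmG : ∀ x y, N.adj x y → ∀ t ∈ Set.Icc (0:ℝ) 1, fG x y t = fG y x (1 - t))
    (φF φG : V → ℂ)
    (hφF : ∀ x y, N.adj x y → φF x = fF x y 0)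
    (hφG : ∀ x y, N.adj x y → φG x = fG x y 0)
    (hφF0 : ∀ x, (∀ y, ¬ N.adj x y) → φF x = 0)
    (hφG0 : ∀ x, (∀ y, ¬ N.adj x y) → φG x = 0) :
    ((1/2 : ℂ) * ∑' x, ∑' y, (N.c x y : ℂ) *
        ∫ t in (0:ℝ)..1, (starRingEnd ℂ) (fF x y t) * (-(hG x y t)))
      - ((1/2 : ℂ) * ∑' x, ∑' y, (N.c x y : ℂ) *
        ∫ t in (0:ℝ)..1, (starRingEnd ℂ) (-(hF x y t)) * fG x y t)
    = (∑' x, (N.m0 x : ℂ) * (starRingEnd ℂ) (φF x) *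
        ((N.m0 x : ℂ)⁻¹ * ∑' y, (N.c x y : ℂ) * gG x y 0))
      - (∑' x, (N.m0 x : ℂ) *
          (starRingEnd ℂ) ((N.m0 x : ℂ)⁻¹ * ∑' y, (N.c x y : ℂ) * gF x y 0) * φG x) :=
  green_identity_general N fF gF hF fG gG hG hrepF hrepG hsymmF hsymmG φF φG hφF hφG
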